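/- Let K ⊂ ℝ² be a nondegenerate triangle with vertices a₁, a₂, a₃, area |K|, and edge vectors ℓ₁ = a₃ − a₂, ℓ₂ = a₁ − a₃, ℓ₃ = a₂ − a₁. Let u : ℝ² → ℝ be a quadratic polynomial with constant Hessian H, u_I its linear interpolant at the vertices, d_i = ℓ_i · (H ℓ_i), and d = (d₁, d₂, d₃)ᵀ. Let B be the symmetric 3×3 matrix with diagonal entries B_{ii} = (|ℓ₁|² + |ℓ₂|² + |ℓ₃|²)/(48|K|) and off-diagonal entries B_{ij} = (2 ℓ_i · ℓ_j)/(48|K|) for i ≠ j. Then ∫_K |∇(u − u_I)(x)|² dx = (1/4) d · (B d). -/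

import Mathlib

open MeasureTheory RealInnerProductSpace Matrix

/-- The bilinear form `v ⬝ (H w)` induced by a `2 × 2` real matrix `H` on `ℝ²`. -/
noncomputable def matBilin (H : Matrix (Fin 2) (Fin 2) ℝ)
    (v w : EuclideanSpace ℝ (Fin 2)) : ℝ :=
  ∑ i : Fin 2, ∑ j : Fin 2, v i * H i j * w j

/-!
The error `e = u - u_I` is a quadratic with Hessian `H` vanishing at the vertices, so `∇e` is
affine and `‖∇e‖²` is a quadratic polynomial, integrated exactly by the edge-midpoint rule
`∫_K q = |K| / 3 · ∑ᵢ q(mᵢ)`. For a quadratic, `e y - e x = ⟪∇e (midpoint x y), y - x⟫`; hence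
the gradient `gᵢ` at the midpoint `mᵢ` of the edge `ℓᵢ` is orthogonal to `ℓᵢ`, and since
`gᵢ - gᵢ₊₁ = H ℓᵢ₊₂ / 2`, also `⟪gᵢ, ℓᵢ₊₁⟫ = ⟪H ℓᵢ₊₂, ℓᵢ₊₁⟫ / 2 = (dᵢ - dᵢ₊₁ - dᵢ₊₂) / 4`.
In the plane these two inner products determine `‖gᵢ‖`:
`(2|K|)² ‖gᵢ‖² = ⟪gᵢ, ℓᵢ₊₁⟫² ‖ℓᵢ‖²`. Summing over the edges, the identity
`∑ᵢ (dᵢ - dᵢ₊₁ - dᵢ₊₂)² ‖ℓᵢ‖² = 48 |K| · d · B d`, which follows from `ℓ₁ + ℓ₂ + ℓ₃ = 0`,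
finishes the proof.
-/

section InnerProductSpace

variable {E : Type*} [NormedAddCommGroup E] [InnerProductSpace ℝ E]

lemma norm_add_smul_add_smul_sq (g₀ g₁ g₂ : E) (s t : ℝ) :
    ‖g₀ + s • g₁ + t • g₂‖ ^ 2 = ‖g₀‖ ^ 2 + 2 * ⟪g₀, g₁⟫ * s + 2 * ⟪g₀, g₂⟫ * t +
      ‖g₁‖ ^ 2 * s ^ 2 + ‖g₂‖ ^ 2 * t ^ 2 + 2 * ⟪g₁, g₂⟫ * s * t := by
  simp only [← real_inner_self_eq_norm_sq, inner_add_left, inner_add_right, real_inner_smul_left,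
    real_inner_smul_right, real_inner_comm g₀ g₁, real_inner_comm g₀ g₂, real_inner_comm g₁ g₂]
  ring

lemma sq_mul_norm_sq_add_of_add_add_eq_zero {x y z : E} (h : x + y + z = 0) (p q r : ℝ) :
    (p - q - r) ^ 2 * ‖x‖ ^ 2 + (q - r - p) ^ 2 * ‖y‖ ^ 2 + (r - p - q) ^ 2 * ‖z‖ ^ 2 =
      (‖x‖ ^ 2 + ‖y‖ ^ 2 + ‖z‖ ^ 2) * (p ^ 2 + q ^ 2 + r ^ 2) +
        4 * (⟪x, y⟫ * p * q + ⟪y, z⟫ * q * r + ⟪z, x⟫ * r * p) := by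
  obtain rfl : z = -(x + y) := eq_neg_of_add_eq_zero_right h
  simp only [norm_neg, norm_add_sq_real, inner_neg_left, inner_neg_right, inner_add_left,
    inner_add_right, real_inner_self_eq_norm_sq, real_inner_comm x y]
  ring

lemma AffineMap.exists_eq_inner_add [FiniteDimensional ℝ E] (f : E →ᵃ[ℝ] ℝ) :
    ∃ w : E, ∀ x, f x = ⟪w, x⟫ + f 0 := by
  refine ⟨(InnerProductSpace.toDual ℝ E).symm (LinearMap.toContinuousLinearMap f.linear),
    fun x ↦ ?_⟩
  simpa using f.map_vadd 0 x

noncomputable def quadraticFun (A : E →ₗ[ℝ] E) (w : E) (c : ℝ) (x : E) : ℝ :=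
  1 / 2 * ⟪x, A x⟫ + ⟪w, x⟫ + c

variable {A : E →ₗ[ℝ] E}

lemma LinearMap.IsSymmetric.hasGradientAt_quadraticFun [CompleteSpace E] (hA : A.IsSymmetric)
    (w : E) (c : ℝ) (x : E) : HasGradientAt (quadraticFun A w c) (A x + w) x := by
  let T : E →L[ℝ] E := ⟨A, hA.continuous⟩
  have hT := (((LinearMap.IsSymmetric.hasStrictFDerivAt_reApplyInnerSelf (T := T) hA
    x).hasFDerivAt.const_mul (1 / 2)).add (innerSL ℝ w).hasFDerivAt).add_const c
  rw [hasGradientAt_iff_hasFDerivAt]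
  refine (hT.congr_fderiv ?_).congr_of_eventuallyEq (.of_forall fun y ↦ ?_)
  · ext v
    simp [T]
  · simp [quadraticFun, ContinuousLinearMap.reApplyInnerSelf, real_inner_comm, T]

lemma LinearMap.IsSymmetric.quadraticFun_sub (hA : A.IsSymmetric) (w : E) (c : ℝ) (x y : E) :
    quadraticFun A w c y - quadraticFun A w c x = ⟪A (midpoint ℝ x y) + w, y - x⟫ := by
  rw [midpoint_eq_smul_add, invOf_eq_inv]
  simp only [quadraticFun, map_smul, map_add, inner_add_left, inner_sub_right,
    real_inner_smul_left, real_inner_comm (A x) y, hA _ _]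
  ring

lemma LinearMap.IsSymmetric.two_mul_inner_gradient_midpoint (hA : A.IsSymmetric) {w : E}
    {c : ℝ} {x y z : E} (hx : quadraticFun A w c x = 0) (hz : quadraticFun A w c z = 0) :
    2 * ⟪A (midpoint ℝ y z) + w, x - z⟫ = ⟪A (y - x), x - z⟫ := by
  have hzx : ⟪A (midpoint ℝ z x) + w, x - z⟫ = 0 := by
    rw [← hA.quadraticFun_sub, hx, hz, sub_zero]
  have hshift : A (midpoint ℝ y z) + w = A (midpoint ℝ z x) + w + (1 / 2 : ℝ) • A (y - x) := by
    rw [← map_smul, add_right_comm, ← map_add, midpoint_eq_smul_add, midpoint_eq_smul_add,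
      invOf_eq_inv]
    congr 2
    module
  rw [hshift, inner_add_left, hzx, real_inner_smul_left]
  ring

lemma LinearMap.IsSymmetric.two_mul_inner_of_add_add_eq_zero (hA : A.IsSymmetric) {x y z : E}
    (h : x + y + z = 0) : 2 * ⟪A z, y⟫ = ⟪x, A x⟫ - ⟪y, A y⟫ - ⟪z, A z⟫ := by
  obtain rfl : x = -(y + z) := eq_neg_of_add_eq_zero_left (by rwa [← add_assoc])
  simp only [map_neg, map_add, inner_neg_left, inner_neg_right, inner_add_left, inner_add_right,
    real_inner_comm (A z) y, hA _ _]
  ring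

end InnerProductSpace

lemma intervalIntegral_cubic (a c₀ c₁ c₂ c₃ : ℝ) :
    ∫ x in (0 : ℝ)..a, (c₀ + c₁ * x + c₂ * x ^ 2 + c₃ * x ^ 3) =
      c₀ * a + c₁ / 2 * a ^ 2 + c₂ / 3 * a ^ 3 + c₃ / 4 * a ^ 4 := by
  have hderiv (x : ℝ) :
      HasDerivAt (fun t ↦ c₀ * t + c₁ / 2 * t ^ 2 + c₂ / 3 * t ^ 3 + c₃ / 4 * t ^ 4)
        (c₀ + c₁ * x + c₂ * x ^ 2 + c₃ * x ^ 3) x := by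
    refine (((((hasDerivAt_id x).const_mul c₀).add ((hasDerivAt_pow 2 x).const_mul (c₁ / 2))).add
      ((hasDerivAt_pow 3 x).const_mul (c₂ / 3))).add
        ((hasDerivAt_pow 4 x).const_mul (c₃ / 4))).congr_deriv ?_
    norm_num
    ring
  rw [intervalIntegral.integral_eq_sub_of_hasDerivAt (fun x _ ↦ hderiv x)
    (Continuous.intervalIntegrable (by fun_prop) 0 a)]
  ring

def refTriangle : Set (ℝ × ℝ) := {q | 0 ≤ q.1 ∧ 0 ≤ q.2 ∧ q.1 + q.2 ≤ 1}

lemma isClosed_refTriangle : IsClosed refTriangle :=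
  (isClosed_le continuous_const continuous_fst).inter
    ((isClosed_le continuous_const continuous_snd).inter
      (isClosed_le (continuous_fst.add continuous_snd) continuous_const))

lemma measurableSet_refTriangle : MeasurableSet refTriangle :=
  isClosed_refTriangle.measurableSet

lemma isCompact_refTriangle : IsCompact refTriangle :=
  (isCompact_Icc (a := ((0 : ℝ), (0 : ℝ))) (b := (1, 1))).of_isClosed_subset isClosed_refTriangle
    fun _ ⟨h₁, h₂, h₁₂⟩ ↦ ⟨⟨h₁, h₂⟩, ⟨by linarith, by linarith⟩⟩

lemma mk_mem_refTriangle {x y : ℝ} :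
    (x, y) ∈ refTriangle ↔ x ∈ Set.Icc 0 1 ∧ y ∈ Set.Icc 0 (1 - x) :=
  ⟨fun ⟨hx, hy, hxy⟩ ↦ ⟨⟨hx, by linarith⟩, hy, by linarith⟩,
    fun ⟨⟨hx, _⟩, hy, hxy⟩ ↦ ⟨hx, hy, by linarith⟩⟩

lemma integral_indicator_refTriangle_slice (f : ℝ × ℝ → ℝ) (x : ℝ) :
    ∫ y, refTriangle.indicator f (x, y) =
      (Set.Icc 0 1).indicator (fun x ↦ ∫ y in (0 : ℝ)..(1 - x), f (x, y)) x := by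
  by_cases hx : x ∈ Set.Icc (0 : ℝ) 1
  · have hslice : (fun y ↦ refTriangle.indicator f (x, y)) =
        (Set.Icc 0 (1 - x)).indicator (fun y ↦ f (x, y)) := by
      ext y
      simp only [Set.indicator, mk_mem_refTriangle, hx, true_and]
    rw [Set.indicator_of_mem hx, hslice, integral_indicator measurableSet_Icc,
      integral_Icc_eq_integral_Ioc, intervalIntegral.integral_of_le (by linarith [hx.2])]
  · have hslice : (fun y ↦ refTriangle.indicator f (x, y)) = fun _ ↦ 0 := by
      ext y
      simp [Set.indicator, mk_mem_refTriangle, hx]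
    rw [Set.indicator_of_notMem hx, hslice, integral_zero]

lemma setIntegral_refTriangle_eq_intervalIntegral {f : ℝ × ℝ → ℝ} (hf : Continuous f) :
    ∫ q in refTriangle, f q = ∫ x in (0 : ℝ)..1, ∫ y in (0 : ℝ)..(1 - x), f (x, y) := by
  have hint : Integrable (refTriangle.indicator f) :=
    (integrable_indicator_iff measurableSet_refTriangle).2
      (hf.continuousOn.integrableOn_compact isCompact_refTriangle)
  rw [← integral_indicator measurableSet_refTriangle, Measure.volume_eq_prod,
    integral_prod _ (by rwa [← Measure.volume_eq_prod]),
    intervalIntegral.integral_of_le zero_le_one, ← integral_Icc_eq_integral_Ioc,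
    ← integral_indicator measurableSet_Icc]
  exact integral_congr_ae (ae_of_all _ (integral_indicator_refTriangle_slice f))

lemma setIntegral_refTriangle_quadratic (α β γ δ ε ζ : ℝ) :
    ∫ q in refTriangle, (α + β * q.1 + γ * q.2 + δ * q.1 ^ 2 + ε * q.2 ^ 2 + ζ * q.1 * q.2) =
      α / 2 + β / 6 + γ / 6 + δ / 12 + ε / 12 + ζ / 24 := by
  rw [setIntegral_refTriangle_eq_intervalIntegral (by fun_prop)]
  have hslice (x : ℝ) :
      ∫ y in (0 : ℝ)..(1 - x), (α + β * x + γ * y + δ * x ^ 2 + ε * y ^ 2 + ζ * x * y) =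
      (α + γ / 2 + ε / 3) + (β - α + ζ / 2 - γ - ε) * x + (δ - β + γ / 2 - ζ + ε) * x ^ 2
        + (-δ + ζ / 2 - ε / 3) * x ^ 3 := by
    rw [intervalIntegral.integral_congr (g := fun y ↦ (α + β * x + δ * x ^ 2) + (γ + ζ * x) * y
      + ε * y ^ 2 + 0 * y ^ 3) (fun y _ ↦ by ring), intervalIntegral_cubic]
    ring
  simp only [hslice, intervalIntegral_cubic]
  ring

lemma convex_refTriangle : Convex ℝ refTriangle := by
  rintro x ⟨hx₁, hx₂, hx₁₂⟩ y ⟨hy₁, hy₂, hy₁₂⟩ s t hs ht hst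
  simp only [refTriangle, Set.mem_ofPred_eq, Prod.fst_add, Prod.snd_add, Prod.smul_fst,
    Prod.smul_snd, smul_eq_mul]
  refine ⟨by positivity, by positivity, by nlinarith⟩

lemma convexHull_range_eq_image_refTriangle {E : Type*} [AddCommGroup E] [Module ℝ E]
    (a : Fin 3 → E) :
    convexHull ℝ (Set.range a) =
      (fun q : ℝ × ℝ ↦ a 0 + q.1 • (a 1 - a 0) + q.2 • (a 2 - a 0)) '' refTriangle := by
  apply subset_antisymm
  · let φ : ℝ × ℝ →ᵃ[ℝ] E := ((LinearMap.fst ℝ ℝ ℝ).smulRight (a 1 - a 0) +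
      (LinearMap.snd ℝ ℝ ℝ).smulRight (a 2 - a 0)).toAffineMap + AffineMap.const ℝ _ (a 0)
    have hφ : ⇑φ = fun q : ℝ × ℝ ↦ a 0 + q.1 • (a 1 - a 0) + q.2 • (a 2 - a 0) := by
      ext q
      simp [φ]
      abel
    refine convexHull_min ?_ (hφ ▸ convex_refTriangle.affine_image φ)
    rintro _ ⟨i, rfl⟩
    fin_cases i
    · exact ⟨(0, 0), by simp [refTriangle], by simp⟩
    · exact ⟨(1, 0), by simp [refTriangle], by simp⟩
    · exact ⟨(0, 1), by simp [refTriangle], by simp⟩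
  · rintro _ ⟨q, ⟨hq₁, hq₂, hq₁₂⟩, rfl⟩
    have hmem := (convex_convexHull ℝ (Set.range a)).sum_mem (t := Finset.univ)
      (w := ![1 - q.1 - q.2, q.1, q.2]) (z := a)
      (fun i _ ↦ by fin_cases i <;> simp <;> linarith) (by simp [Fin.sum_univ_three]; ring)
      (fun i _ ↦ subset_convexHull ℝ _ (Set.mem_range_self i))
    convert hmem using 1
    simp [Fin.sum_univ_three]
    module

lemma setIntegral_refTriangle_norm_sq {E : Type*} [NormedAddCommGroup E]
    [InnerProductSpace ℝ E] (g₀ g₁ g₂ : E) :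
    let f := fun q : ℝ × ℝ ↦ ‖g₀ + q.1 • g₁ + q.2 • g₂‖ ^ 2
    ∫ q in refTriangle, f q = (f (1 / 2, 1 / 2) + f (0, 1 / 2) + f (1 / 2, 0)) / 6 := by
  simp only [norm_add_smul_add_smul_sq]
  rw [setIntegral_refTriangle_quadratic]
  ring

local notation "ℝ²" => EuclideanSpace ℝ (Fin 2)

def cross (v w : ℝ²) : ℝ := v 0 * w 1 - v 1 * w 0

noncomputable def columnsCLM (v w : ℝ²) : ℝ² →L[ℝ] ℝ² :=
  toEuclideanCLM (𝕜 := ℝ) !![v 0, w 0; v 1, w 1]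

lemma columnsCLM_apply (v w p : ℝ²) : columnsCLM v w p = p 0 • v + p 1 • w := by
  ext i
  fin_cases i <;> simp [columnsCLM, mulVec, dotProduct, Fin.sum_univ_two] <;> ring

lemma det_columnsCLM (v w : ℝ²) : (columnsCLM v w).det = cross v w := by
  rw [ContinuousLinearMap.det, columnsCLM, coe_toEuclideanCLM_eq_toEuclideanLin,
    toEuclideanLin_eq_toLin_orthonormal, LinearMap.det_toLin, det_fin_two_of, cross]
  ring

lemma AffineIndependent.injective_columnsCLM {a : Fin 3 → ℝ²} (ha : AffineIndependent ℝ a) :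
    Function.Injective (columnsCLM (a 1 - a 0) (a 2 - a 0)) := by
  refine (injective_iff_map_eq_zero _).2 fun p hp ↦ ?_
  rw [columnsCLM_apply] at hp
  have hw := ha.eq_zero_of_sum_eq_zero (s := Finset.univ) (w := ![-(p 0 + p 1), p 0, p 1])
    (by simp [Fin.sum_univ_three])
    (by simp [Fin.sum_univ_three]; linear_combination (norm := module) hp)
  ext i
  fin_cases i
  · simpa using hw 1 (Finset.mem_univ _)
  · simpa using hw 2 (Finset.mem_univ _)

lemma AffineIndependent.cross_ne_zero {a : Fin 3 → ℝ²} (ha : AffineIndependent ℝ a) :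
    cross (a 1 - a 0) (a 2 - a 0) ≠ 0 := by
  rw [← det_columnsCLM, Ne, LinearMap.det_eq_zero_iff_ker_ne_bot, not_not, LinearMap.ker_eq_bot]
  exact ha.injective_columnsCLM

theorem setIntegral_convexHull_eq_abs_cross_smul {G : Type*} [NormedAddCommGroup G]
    [NormedSpace ℝ G] {a : Fin 3 → ℝ²} (ha : AffineIndependent ℝ a) (f : ℝ² → G) :
    ∫ x in convexHull ℝ (Set.range a), f x = |cross (a 1 - a 0) (a 2 - a 0)| •
      ∫ q in refTriangle, f (a 0 + q.1 • (a 1 - a 0) + q.2 • (a 2 - a 0)) := by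
  set L := columnsCLM (a 1 - a 0) (a 2 - a 0)
  let e : ℝ² ≃ᵐ ℝ × ℝ :=
    (MeasurableEquiv.toLp 2 (Fin 2 → ℝ)).symm.trans MeasurableEquiv.finTwoArrow
  have he : MeasurePreserving e := (volume_preserving_finTwoArrow ℝ).comp
    (EuclideanSpace.volume_preserving_symm_measurableEquiv_toLp (Fin 2))
  have hL (p : ℝ²) : a 0 + L p = a 0 + (e p).1 • (a 1 - a 0) + (e p).2 • (a 2 - a 0) := by
    rw [columnsCLM_apply, add_assoc]
    rfl
  have himage : convexHull ℝ (Set.range a) = (fun p ↦ a 0 + L p) '' (e ⁻¹' refTriangle) := by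
    rw [convexHull_range_eq_image_refTriangle]
    conv_lhs => rw [← e.surjective.image_preimage refTriangle, Set.image_image]
    simp only [hL]
  rw [himage, integral_image_eq_integral_abs_det_fderiv_smul volume
    (measurableSet_refTriangle.preimage e.measurable)
    (fun p _ ↦ (L.hasFDerivAt.const_add (a 0)).hasFDerivWithinAt)
    ((add_right_injective (a 0)).comp ha.injective_columnsCLM).injOn, det_columnsCLM,
    integral_smul]
  simp only [hL]
  rw [he.setIntegral_preimage_emb e.measurableEmbedding
    (fun q ↦ f (a 0 + q.1 • (a 1 - a 0) + q.2 • (a 2 - a 0)))]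

lemma toReal_volume_convexHull {a : Fin 3 → ℝ²} (ha : AffineIndependent ℝ a) :
    (volume (convexHull ℝ (Set.range a))).toReal = |cross (a 1 - a 0) (a 2 - a 0)| / 2 := by
  have h := setIntegral_convexHull_eq_abs_cross_smul ha (fun _ ↦ (1 : ℝ))
  have hvol : ∫ _ in refTriangle, (1 : ℝ) = 1 / 2 := by
    simpa using setIntegral_refTriangle_quadratic 1 0 0 0 0 0
  rw [hvol, setIntegral_const, smul_eq_mul, mul_one] at h
  rw [← Measure.real, h, smul_eq_mul, mul_one_div]

lemma cross_sub_sub_cyclic (a : Fin 3 → ℝ²) (i : Fin 3) :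
    cross (a (i + 2) - a (i + 1)) (a i - a (i + 2)) = cross (a 1 - a 0) (a 2 - a 0) := by
  fin_cases i <;> simp [cross] <;> ring

theorem setIntegral_convexHull_norm_sq_affineMap {E : Type*} [NormedAddCommGroup E]
    [InnerProductSpace ℝ E] {a : Fin 3 → ℝ²} (ha : AffineIndependent ℝ a) (g : ℝ² →ᵃ[ℝ] E) :
    ∫ x in convexHull ℝ (Set.range a), ‖g x‖ ^ 2 =
      (volume (convexHull ℝ (Set.range a))).toReal / 3 *
        ∑ i : Fin 3, ‖g (midpoint ℝ (a (i + 1)) (a (i + 2)))‖ ^ 2 := by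
  have hg (s t : ℝ) : g (a 0 + s • (a 1 - a 0) + t • (a 2 - a 0)) =
      g (a 0) + s • g.linear (a 1 - a 0) + t • g.linear (a 2 - a 0) := by
    rw [add_assoc, add_comm (a 0), ← vadd_eq_add, AffineMap.map_vadd, vadd_eq_add, map_add,
      map_smul, map_smul]
    abel
  have hmid₀ : midpoint ℝ (a 1) (a 2) =
      a 0 + (1 / 2 : ℝ) • (a 1 - a 0) + (1 / 2 : ℝ) • (a 2 - a 0) := by
    rw [midpoint_eq_smul_add, invOf_eq_inv]; module
  have hmid₁ : midpoint ℝ (a 2) (a 0) =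
      a 0 + (0 : ℝ) • (a 1 - a 0) + (1 / 2 : ℝ) • (a 2 - a 0) := by
    rw [midpoint_eq_smul_add, invOf_eq_inv]; module
  have hmid₂ : midpoint ℝ (a 0) (a 1) =
      a 0 + (1 / 2 : ℝ) • (a 1 - a 0) + (0 : ℝ) • (a 2 - a 0) := by
    rw [midpoint_eq_smul_add, invOf_eq_inv]; module
  rw [setIntegral_convexHull_eq_abs_cross_smul ha, toReal_volume_convexHull ha,
    Fin.sum_univ_three]
  simp only [Fin.reduceAdd, zero_add, hmid₀, hmid₁, hmid₂, hg, setIntegral_refTriangle_norm_sq,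
    smul_eq_mul]
  ring

lemma cross_sq_mul_norm_sq_of_inner_eq_zero {g v : ℝ²} (w : ℝ²) (h : ⟪g, v⟫ = 0) :
    cross v w ^ 2 * ‖g‖ ^ 2 = ⟪g, w⟫ ^ 2 * ‖v‖ ^ 2 := by
  simp only [← real_inner_self_eq_norm_sq, PiLp.inner_apply, Fin.sum_univ_two, cross,
    RCLike.inner_apply, conj_trivial] at h ⊢
  linear_combination ((g 0 * v 0 + g 1 * v 1) * (w 0 * w 0 + w 1 * w 1)
    - 2 * (g 0 * w 0 + g 1 * w 1) * (v 0 * w 0 + v 1 * w 1)) * h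

lemma matBilin_eq_inner (H : Matrix (Fin 2) (Fin 2) ℝ) (v w : ℝ²) :
    matBilin H v w = ⟪v, toEuclideanLin H w⟫ := by
  rw [← coe_toEuclideanCLM_eq_toEuclideanLin, ContinuousLinearMap.coe_coe, inner_toEuclideanCLM]
  simp [matBilin, dotProduct, mulVec, Fin.sum_univ_two]
  ring

lemma cross_sq_mul_norm_sq_gradient_midpoint {A : ℝ² →ₗ[ℝ] ℝ²} (hA : A.IsSymmetric) {w : ℝ²}
    {c : ℝ} {a : Fin 3 → ℝ²} (hq : ∀ i, quadraticFun A w c (a i) = 0) {ℓ : Fin 3 → ℝ²}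
    (hℓ : ∀ i, ℓ i = a (i + 2) - a (i + 1)) {d : Fin 3 → ℝ} (hd : ∀ i, d i = ⟪ℓ i, A (ℓ i)⟫)
    (i : Fin 3) :
    16 * cross (a 1 - a 0) (a 2 - a 0) ^ 2 * ‖A (midpoint ℝ (a (i + 1)) (a (i + 2))) + w‖ ^ 2 =
      (d i - d (i + 1) - d (i + 2)) ^ 2 * ‖ℓ i‖ ^ 2 := by
  have hℓ₁ : ℓ (i + 1) = a i - a (i + 2) := by
    rw [hℓ, show i + 1 + 2 = i by fin_cases i <;> rfl,
      show i + 1 + 1 = i + 2 by fin_cases i <;> rfl]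
  have hℓ₂ : ℓ (i + 2) = a (i + 1) - a i := by
    rw [hℓ, show i + 2 + 2 = i + 1 by fin_cases i <;> rfl,
      show i + 2 + 1 = i by fin_cases i <;> rfl]
  have horth : ⟪A (midpoint ℝ (a (i + 1)) (a (i + 2))) + w, ℓ i⟫ = 0 := by
    rw [hℓ, ← hA.quadraticFun_sub, hq, hq, sub_zero]
  have hedge : 2 * ⟪A (midpoint ℝ (a (i + 1)) (a (i + 2))) + w, ℓ (i + 1)⟫ =
      ⟪A (ℓ (i + 2)), ℓ (i + 1)⟫ := by
    rw [hℓ₁, hℓ₂]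
    exact hA.two_mul_inner_gradient_midpoint (hq i) (hq (i + 2))
  have hdiff := hA.two_mul_inner_of_add_add_eq_zero (x := ℓ i) (y := ℓ (i + 1)) (z := ℓ (i + 2))
    (by rw [hℓ, hℓ₁, hℓ₂]; abel)
  rw [← cross_sub_sub_cyclic a i, ← hℓ, ← hℓ₁, mul_assoc,
    cross_sq_mul_norm_sq_of_inner_eq_zero _ horth, hd, hd, hd, ← hdiff, ← hedge]
  ring

/-- Bank–Smith formula: for a quadratic `u` with constant Hessian `H` and its linear
interpolant `u_I` on a nondegenerate triangle `K`, with `dᵢ = ℓᵢ · (H ℓᵢ)` and the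
`3 × 3` matrix `B` with diagonal entries `(|ℓ₁|²+|ℓ₂|²+|ℓ₃|²)/(48|K|)` and
off-diagonal entries `2 ℓᵢ·ℓⱼ/(48|K|)`, one has
`∫_K |∇(u − u_I)|² = (1/4) d · (B d)`. -/
theorem integral_gradient_sq_interp_error_bank_smith
    (a : Fin 3 → EuclideanSpace ℝ (Fin 2))
    (hind : AffineIndependent ℝ a)
    (K : Set (EuclideanSpace ℝ (Fin 2)))
    (hK : K = convexHull ℝ (Set.range a))
    (H : Matrix (Fin 2) (Fin 2) ℝ) (hH : H.IsSymm)
    (b : EuclideanSpace ℝ (Fin 2)) (c : ℝ)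
    (u : EuclideanSpace ℝ (Fin 2) → ℝ)
    (hu : ∀ x, u x = (1 / 2) * matBilin H x x + ⟪b, x⟫ + c)
    (uI : EuclideanSpace ℝ (Fin 2) →ᵃ[ℝ] ℝ)
    (hI : ∀ i, uI (a i) = u (a i))
    (ℓ : Fin 3 → EuclideanSpace ℝ (Fin 2))
    (hℓ : ∀ i, ℓ i = a (i + 2) - a (i + 1))
    (d : Fin 3 → ℝ)
    (hd : ∀ i, d i = matBilin H (ℓ i) (ℓ i))
    (B : Matrix (Fin 3) (Fin 3) ℝ)
    (hBdiag : ∀ i, B i i =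
      (‖ℓ 0‖ ^ 2 + ‖ℓ 1‖ ^ 2 + ‖ℓ 2‖ ^ 2) / (48 * (volume K).toReal))
    (hBoff : ∀ i j, i ≠ j → B i j = (2 * ⟪ℓ i, ℓ j⟫) / (48 * (volume K).toReal)) :
    ∫ x in K, ‖gradient (fun y => u y - uI y) x‖ ^ 2 =
      (1 / 4) * (d ⬝ᵥ B.mulVec d) := by
  obtain ⟨w, hw⟩ := uI.exists_eq_inner_add
  set A := toEuclideanLin H
  have hA : A.IsSymmetric := isSymmetric_toEuclideanLin_iff.2 (isHermitian_iff_isSymm.2 hH)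
  have herr : (fun y ↦ u y - uI y) = quadraticFun A (b - w) (c - uI 0) := by
    ext y
    rw [hu, hw, matBilin_eq_inner, quadraticFun, inner_sub_left]
    ring
  have hgrad (x : ℝ²) :
      gradient (fun y ↦ u y - uI y) x = (A.toAffineMap + AffineMap.const ℝ ℝ² (b - w)) x := by
    rw [herr, (hA.hasGradientAt_quadraticFun _ _ x).gradient]
    rfl
  have hmid := cross_sq_mul_norm_sq_gradient_midpoint hA
    (fun i ↦ by rw [← herr, sub_eq_zero, hI]) hℓ
    (fun i ↦ (hd i).trans (matBilin_eq_inner _ _ _))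
  obtain ⟨hm₀, hm₁, hm₂⟩ : _ ∧ _ ∧ _ := ⟨hmid 0, hmid 1, hmid 2⟩
  simp only [Fin.reduceAdd, zero_add, ← sq_abs (cross (a 1 - a 0) (a 2 - a 0))] at hm₀ hm₁ hm₂
  have hℓ₀ : ℓ 0 + ℓ 1 + ℓ 2 = 0 := by simp only [hℓ, Fin.reduceAdd, zero_add]; abel
  have hD := abs_ne_zero.2 hind.cross_ne_zero
  rw [hK, toReal_volume_convexHull hind] at hBdiag hBoff
  simp only [hgrad]
  rw [hK, setIntegral_convexHull_norm_sq_affineMap hind, toReal_volume_convexHull hind]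
  simp (disch := decide) only [AffineMap.coe_add, LinearMap.coe_toAffineMap, AffineMap.coe_const,
    Pi.add_apply, Function.const_apply, Fin.sum_univ_three, Fin.reduceAdd, zero_add, dotProduct,
    mulVec, hBdiag, hBoff]
  field_simp
  rw [real_inner_comm (ℓ 0) (ℓ 1), real_inner_comm (ℓ 2) (ℓ 0), real_inner_comm (ℓ 1) (ℓ 2)]
  linear_combination 12 * (hm₀ + hm₁ + hm₂) +
    12 * sq_mul_norm_sq_add_of_add_add_eq_zero hℓ₀ (d 0) (d 1) (d 2)
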